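/- Let (G,E,∂,▷) be a crossed module and consider tetrahedron data: edge labels g_ab∈G (among others) and face labels e_abc,e_abd,e_acd,e_bcd∈E, with 2-holonomy H₂ = e_acd·e_abc·(g_ab▷e_bcd⁻¹)·e_abd⁻¹. Under the edge gauge transformation at edge ab with parameter e∈E, which maps e_abc ↦ e_abc·e⁻¹, e_abd ↦ e_abd·e⁻¹, g_ab ↦ ∂(e)·g_ab, and fixes e_acd, e_bcd, the 2-holonomy H₂ is invariant. -/
import Mathlib

structure CrossedModule (G E : Type*) [Group G] [Group E] where
  δ : E →* G
  act : G →* MulAut E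
  peiffer1 : ∀ (g : G) (e : E), δ (act g e) = g * δ e * g⁻¹
  peiffer2 : ∀ (e f : E), act (δ e) f = e * f * e⁻¹

/-- The tetrahedron 2-holonomy `H₂ = e_acd·e_abc·(g_ab ▷ e_bcd⁻¹)·e_abd⁻¹` is invariant
under the edge gauge transformation at edge `ab` with parameter `e`, which maps
`e_abc ↦ e_abc·e⁻¹`, `e_abd ↦ e_abd·e⁻¹`, `g_ab ↦ ∂(e)·g_ab`. -/
theorem H2_edge_ab_gauge_invariant {G E : Type*} [Group G] [Group E] (X : CrossedModule G E) :
    ∀ (g_ab : G) (e_abc e_abd e_acd e_bcd e : E),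
      e_acd * (e_abc * e⁻¹) * X.act (X.δ e * g_ab) e_bcd⁻¹ * (e_abd * e⁻¹)⁻¹ =
        e_acd * e_abc * X.act g_ab e_bcd⁻¹ * e_abd⁻¹ := by
  intro g_ab e_abc e_abd e_acd e_bcd e
  have h : X.act (X.δ e * g_ab) e_bcd⁻¹ = e * X.act g_ab e_bcd⁻¹ * e⁻¹ := by
    rw [map_mul]
    exact X.peiffer2 e (X.act g_ab e_bcd⁻¹)
  rw [h]
  group
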